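/- arXiv:2301.03877 — 2 statements merged into one kernel-verified Lean document; each statement's English description precedes it below -/
import Mathlib

section
/- For every bounded linear operator T on a complex Hilbert space, w(T) ≤ √((min over α ∈ [0,1] of ‖α|T| + (1−α)|T*|‖) · ‖T‖) ≤ ‖T‖. -/
/-!
For a unit vector `x`, `|⟨Tx, x⟩|² ≤ ‖Tx‖² = ‖|T| x‖² ≤ ‖T‖ ⟨|T| x, x⟩`, where the last step is the
operator inequality `|T|² ≤ ‖|T|‖ |T|` for the positive operator `|T|` together with
`‖|T|‖ = ‖T‖`. Applied to `T*`, whose modulus is `|T*|` and for which `|⟨T* x, x⟩| = |⟨Tx, x⟩|`,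
this gives the same bound with `|T*|`, and a convex combination of the two gives
`|⟨Tx, x⟩|² ≤ ‖T‖ ‖α|T| + (1 - α)|T*|‖`. The infimum over `α ∈ [0, 1]` is attained by
compactness, and the triangle inequality with `‖|T|‖ = ‖|T*|‖ = ‖T‖` gives the upper bound `‖T‖`.
-/

variable {H : Type*} [NormedAddCommGroup H] [InnerProductSpace ℂ H] [CompleteSpace H]

/-- The numerical radius of a bounded linear operator. -/
noncomputable def numRad (T : H →L[ℂ] H) : ℝ :=
  sSup {r : ℝ | ∃ x : H, ‖x‖ = 1 ∧ r = ‖(inner ℂ (T x) x : ℂ)‖}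

/-- The α-norm of a bounded linear operator. -/
noncomputable def alphaNorm (α : ℝ) (T : H →L[ℂ] H) : ℝ :=
  sSup {r : ℝ | ∃ x : H, ‖x‖ = 1 ∧
    r = Real.sqrt (α * (‖(inner ℂ (T x) x : ℂ)‖)^2 + (1 - α) * ‖T x‖^2)}

/-- `|T| = (T* T)^(1/2)`. -/
noncomputable def absOp (T : H →L[ℂ] H) : H →L[ℂ] H :=
  CFC.sqrt (ContinuousLinearMap.adjoint T * T)

/-- `|T*| = (T T*)^(1/2)`. -/
noncomputable def absAdj (T : H →L[ℂ] H) : H →L[ℂ] H :=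
  CFC.sqrt (T * ContinuousLinearMap.adjoint T)

/-- The real part `(A + A*)/2`. -/
noncomputable def reOp (A : H →L[ℂ] H) : H →L[ℂ] H :=
  (2:ℝ)⁻¹ • (A + ContinuousLinearMap.adjoint A)

/-- The imaginary part `(A - A*)/(2i)`. -/
noncomputable def imOp (A : H →L[ℂ] H) : H →L[ℂ] H :=
  ((2 * Complex.I)⁻¹ : ℂ) • (A - ContinuousLinearMap.adjoint A)

open ContinuousLinearMap Set
open scoped InnerProductSpace

/-- Conjugating `a ≤ ‖a‖` by `√a`. -/
lemma CStarAlgebra.mul_self_le_norm_smul {A : Type*} [CStarAlgebra A] [PartialOrder A]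
    [StarOrderedRing A] {a : A} (ha : 0 ≤ a) : a * a ≤ ‖a‖ • a := by
  set s := CFC.sqrt a
  have hs : s * s = a := CFC.sqrt_mul_sqrt_self a ha
  have hle :=
    star_left_conjugate_le_conjugate (IsSelfAdjoint.of_nonneg ha).le_algebraMap_norm_self s
  rw [(IsSelfAdjoint.of_nonneg (CFC.sqrt_nonneg a)).star_eq, Algebra.algebraMap_eq_smul_one,
    mul_smul_comm, mul_one, smul_mul_assoc, hs] at hle
  calc a * a = s * a * s := by rw [← hs]; simp only [mul_assoc]
    _ ≤ ‖a‖ • a := hle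

lemma re_inner_real_smul_left {E : Type*} [NormedAddCommGroup E] [InnerProductSpace ℂ E]
    (r : ℝ) (y x : E) : RCLike.re ⟪r • y, x⟫_ℂ = r * RCLike.re ⟪y, x⟫_ℂ := by
  rw [RCLike.real_smul_eq_coe_smul (K := ℂ), inner_smul_real_left, RCLike.smul_re]

lemma norm_apply_sq_le_norm_mul_re_inner {a : H →L[ℂ] H} (ha : 0 ≤ a) (x : H) :
    ‖a x‖ ^ 2 ≤ ‖a‖ * RCLike.re ⟪a x, x⟫_ℂ := by
  have hpos := ((le_def _ _).mp (CStarAlgebra.mul_self_le_norm_smul ha)).re_inner_nonneg_left x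
  rw [sub_apply, inner_sub_left, map_sub, smul_apply, re_inner_real_smul_left] at hpos
  have hsq : ‖a x‖ ^ 2 = RCLike.re ⟪(a * a) x, x⟫_ℂ := by
    rw [apply_norm_sq_eq_inner_adjoint_left, (IsSelfAdjoint.of_nonneg ha).adjoint_eq]
    rfl
  linarith

lemma absOp_nonneg (T : H →L[ℂ] H) : 0 ≤ absOp T := CFC.sqrt_nonneg _

lemma norm_absOp_apply (T : H →L[ℂ] H) (x : H) : ‖absOp T x‖ = ‖T x‖ := by
  have hsq : absOp T * absOp T = adjoint T * T :=
    CFC.sqrt_mul_sqrt_self _ (by rw [← star_eq_adjoint]; exact star_mul_self_nonneg T)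
  have hsq_apply : ‖absOp T x‖ ^ 2 = ‖T x‖ ^ 2 := by
    rw [apply_norm_sq_eq_inner_adjoint_left (absOp T), apply_norm_sq_eq_inner_adjoint_left T,
      (IsSelfAdjoint.of_nonneg (absOp_nonneg T)).adjoint_eq]
    exact congrArg (fun B : H →L[ℂ] H => RCLike.re ⟪B x, x⟫_ℂ) hsq
  exact (sq_eq_sq₀ (norm_nonneg _) (norm_nonneg _)).mp hsq_apply

lemma norm_absOp (T : H →L[ℂ] H) : ‖absOp T‖ = ‖T‖ :=
  opNorm_ext _ _ (norm_absOp_apply T)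

lemma absAdj_eq_absOp_adjoint (T : H →L[ℂ] H) : absAdj T = absOp (adjoint T) := by
  rw [absOp, absAdj, adjoint_adjoint]

lemma norm_absAdj (T : H →L[ℂ] H) : ‖absAdj T‖ = ‖T‖ := by
  rw [absAdj_eq_absOp_adjoint, norm_absOp, adjoint.norm_map]

lemma norm_inner_apply_self_sq_le_absOp (T : H →L[ℂ] H) (x : H) :
    ‖⟪T x, x⟫_ℂ‖ ^ 2 ≤ ‖T‖ * RCLike.re ⟪absOp T x, x⟫_ℂ * ‖x‖ ^ 2 := by
  calc ‖⟪T x, x⟫_ℂ‖ ^ 2 ≤ ‖T x‖ ^ 2 * ‖x‖ ^ 2 := by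
        rw [← mul_pow]; gcongr; exact norm_inner_le_norm _ _
    _ = ‖absOp T x‖ ^ 2 * ‖x‖ ^ 2 := by rw [norm_absOp_apply]
    _ ≤ ‖T‖ * RCLike.re ⟪absOp T x, x⟫_ℂ * ‖x‖ ^ 2 := by
        rw [← norm_absOp T]
        gcongr
        exact norm_apply_sq_le_norm_mul_re_inner (absOp_nonneg T) x

lemma norm_inner_apply_self_sq_le_absAdj (T : H →L[ℂ] H) (x : H) :
    ‖⟪T x, x⟫_ℂ‖ ^ 2 ≤ ‖T‖ * RCLike.re ⟪absAdj T x, x⟫_ℂ * ‖x‖ ^ 2 := by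
  have h := norm_inner_apply_self_sq_le_absOp (adjoint T) x
  rwa [adjoint_inner_left, norm_inner_symm, adjoint.norm_map, ← absAdj_eq_absOp_adjoint] at h

lemma norm_inner_apply_self_sq_le_convex (T : H →L[ℂ] H) {α : ℝ} (hα : α ∈ Icc (0 : ℝ) 1)
    (x : H) : ‖⟪T x, x⟫_ℂ‖ ^ 2 ≤ ‖T‖ * ‖α • absOp T + (1 - α) • absAdj T‖ * ‖x‖ ^ 4 := by
  set B := α • absOp T + (1 - α) • absAdj T
  have hB : RCLike.re ⟪B x, x⟫_ℂ =
      α * RCLike.re ⟪absOp T x, x⟫_ℂ + (1 - α) * RCLike.re ⟪absAdj T x, x⟫_ℂ := by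
    rw [add_apply, smul_apply, smul_apply, inner_add_left, map_add, re_inner_real_smul_left,
      re_inner_real_smul_left]
  have hB_le : RCLike.re ⟪B x, x⟫_ℂ ≤ ‖B‖ * ‖x‖ ^ 2 := by
    calc RCLike.re ⟪B x, x⟫_ℂ ≤ ‖B x‖ * ‖x‖ :=
          (RCLike.re_le_norm _).trans (norm_inner_le_norm _ _)
      _ ≤ ‖B‖ * ‖x‖ * ‖x‖ := by gcongr; exact le_opNorm B x
      _ = ‖B‖ * ‖x‖ ^ 2 := by ring
  have h1α : 0 ≤ 1 - α := sub_nonneg.2 hα.2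
  calc ‖⟪T x, x⟫_ℂ‖ ^ 2 = α * ‖⟪T x, x⟫_ℂ‖ ^ 2 + (1 - α) * ‖⟪T x, x⟫_ℂ‖ ^ 2 := by ring
    _ ≤ α * (‖T‖ * RCLike.re ⟪absOp T x, x⟫_ℂ * ‖x‖ ^ 2)
        + (1 - α) * (‖T‖ * RCLike.re ⟪absAdj T x, x⟫_ℂ * ‖x‖ ^ 2) := by
      gcongr
      · exact hα.1
      · exact norm_inner_apply_self_sq_le_absOp T x
      · exact norm_inner_apply_self_sq_le_absAdj T x
    _ = ‖T‖ * RCLike.re ⟪B x, x⟫_ℂ * ‖x‖ ^ 2 := by rw [hB]; ring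
    _ ≤ ‖T‖ * (‖B‖ * ‖x‖ ^ 2) * ‖x‖ ^ 2 := by gcongr
    _ = ‖T‖ * ‖B‖ * ‖x‖ ^ 4 := by ring

lemma norm_smul_absOp_add_smul_absAdj_le (T : H →L[ℂ] H) {α : ℝ} (hα : α ∈ Icc (0 : ℝ) 1) :
    ‖α • absOp T + (1 - α) • absAdj T‖ ≤ ‖T‖ := by
  calc ‖α • absOp T + (1 - α) • absAdj T‖ ≤ ‖α • absOp T‖ + ‖(1 - α) • absAdj T‖ :=
        norm_add_le _ _
    _ = α * ‖T‖ + (1 - α) * ‖T‖ := by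
        rw [norm_smul, norm_smul, norm_absOp, norm_absAdj, Real.norm_of_nonneg hα.1,
          Real.norm_of_nonneg (sub_nonneg.2 hα.2)]
    _ = ‖T‖ := by ring

lemma numRad_le {E : Type*} [NormedAddCommGroup E] [InnerProductSpace ℂ E] {T : E →L[ℂ] E}
    {c : ℝ} (hc : 0 ≤ c) (h : ∀ x : E, ‖x‖ = 1 → ‖⟪T x, x⟫_ℂ‖ ≤ c) : numRad T ≤ c :=
  Real.sSup_le (by rintro r ⟨x, hx, rfl⟩; exact h x hx) hc

lemma exists_mem_Icc_sInf_eq {f : ℝ → ℝ} (hf : Continuous f) {a b : ℝ} (hab : a ≤ b) :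
    ∃ α ∈ Icc a b, sInf {r | ∃ α ∈ Icc a b, r = f α} = f α := by
  have hS : {r | ∃ α ∈ Icc a b, r = f α} = f '' Icc a b := by ext; simp [eq_comm]
  obtain ⟨α, hα, hmin⟩ : sInf (f '' Icc a b) ∈ f '' Icc a b :=
    (isCompact_Icc.image hf).sInf_mem ((nonempty_Icc.2 hab).image f)
  exact ⟨α, hα, by rw [hS, hmin]⟩

theorem numRad_le_sqrt_inf (T : H →L[ℂ] H) :
    numRad T ≤ Real.sqrt
      ((sInf {r : ℝ | ∃ α ∈ Set.Icc (0:ℝ) 1, r = ‖α • absOp T + (1 - α) • absAdj T‖}) * ‖T‖) ∧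
    Real.sqrt
      ((sInf {r : ℝ | ∃ α ∈ Set.Icc (0:ℝ) 1, r = ‖α • absOp T + (1 - α) • absAdj T‖}) * ‖T‖)
      ≤ ‖T‖ := by
  obtain ⟨α, hα, hmin⟩ := exists_mem_Icc_sInf_eq
    (f := fun α : ℝ => ‖α • absOp T + (1 - α) • absAdj T‖) (by fun_prop) zero_le_one
  rw [hmin]
  refine ⟨numRad_le (Real.sqrt_nonneg _) fun x hx => Real.le_sqrt_of_sq_le ?_, ?_⟩
  · simpa [hx, mul_comm] using norm_inner_apply_self_sq_le_convex T hα x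
  · calc √(‖α • absOp T + (1 - α) • absAdj T‖ * ‖T‖) ≤ √(‖T‖ * ‖T‖) := by
          gcongr; exact norm_smul_absOp_add_smul_absAdj_le T hα
      _ = ‖T‖ := Real.sqrt_mul_self (norm_nonneg T)
end

section
/- Let T be an (α,β)-normal operator on a complex Hilbert space, where 0 ≤ α ≤ 1 ≤ β. Then w(T)² ≥ max{1 + α², 1 + 1/β²}·‖T‖²/4 + |‖Re(T)‖² − ‖Im(T)‖²|/2. -/
variable {H : Type*} [NormedAddCommGroup H] [InnerProductSpace ℂ H] [CompleteSpace H]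

/-!
Write `T = R + iJ` with `R = Re T` and `J = Im T` self-adjoint. The quadratic forms of `R` and `J`
are the real and imaginary parts of `⟪T x, x⟫`, and a self-adjoint operator has norm equal to its
numerical radius, so `‖R‖, ‖J‖ ≤ w(T)` and
`w(T)² ≥ max(‖R‖², ‖J‖²) = (‖R‖² + ‖J‖²)/2 + |‖R‖² - ‖J‖²|/2`.
On the other hand `T*T + TT* = 2(R² + J²)`, so `‖R‖² + ‖J‖² ≥ ‖T*T + TT*‖/2`. Finally
(α,β)-normality gives `(1 + α²) T*T ≤ T*T + TT*` and `(1 + β⁻²) TT* ≤ T*T + TT*`; since the norm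
is monotone on positive operators and `‖T*T‖ = ‖TT*‖ = ‖T‖²`, both constants times `‖T‖²` are
below `‖T*T + TT*‖`.
-/

open ComplexStarModule

lemma inv_smul_le_of_le_smul {𝕜 M : Type*} [Field 𝕜] [LinearOrder 𝕜] [IsStrictOrderedRing 𝕜]
    [AddCommGroup M] [PartialOrder M] [Module 𝕜 M] [PosSMulMono 𝕜 M]
    {r : 𝕜} {a b : M} (hr : 0 ≤ r) (hb : 0 ≤ b) (hab : a ≤ r • b) : r⁻¹ • a ≤ b := by
  rcases hr.eq_or_lt with rfl | hr
  · simpa using hb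
  · simpa [inv_smul_smul₀ hr.ne'] using smul_le_smul_of_nonneg_left hab (inv_nonneg.mpr hr.le)

section CStarAlgebra

variable {A : Type*} [NonUnitalCStarAlgebra A]

lemma norm_star_mul_self_add_self_mul_star_le (a : A) :
    ‖star a * a + a * star a‖ ≤ 2 * (‖(ℜ a : A)‖ ^ 2 + ‖(ℑ a : A)‖ ^ 2) := by
  rw [star_mul_self_add_self_mul_star, ← (ℜ a).prop.norm_mul_self, ← (ℑ a).prop.norm_mul_self]
  calc _ ≤ 2 * ‖(ℜ a : A) * ℜ a + ℑ a * ℑ a‖ := norm_nsmul_le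
    _ ≤ _ := by gcongr; exact norm_add_le _ _

lemma one_add_mul_norm_le_norm_add [PartialOrder A] [StarOrderedRing A] {r : ℝ} {a b : A}
    (hr : 0 ≤ r) (ha : 0 ≤ a) (hab : r • a ≤ b) : (1 + r) * ‖a‖ ≤ ‖a + b‖ := by
  have hle : (1 + r) • a ≤ a + b := by
    rw [add_smul, one_smul]; exact add_le_add_right hab a
  calc (1 + r) * ‖a‖ = ‖(1 + r) • a‖ := by
        rw [norm_smul, Real.norm_of_nonneg (by positivity)]
    _ ≤ ‖a + b‖ := CStarAlgebra.norm_le_norm_of_nonneg_of_le (smul_nonneg (by positivity) ha) hle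

end CStarAlgebra

open ContinuousLinearMap

lemma reOp_eq_realPart (T : H →L[ℂ] H) : reOp T = ℜ T := by
  rw [realPart_apply_coe, star_eq_adjoint]; rfl

lemma imOp_eq_imaginaryPart (T : H →L[ℂ] H) : imOp T = ℑ T := by
  rw [imaginaryPart_apply_coe, star_eq_adjoint, imOp, ← Complex.coe_smul, smul_smul]
  congr 1
  field_simp
  simp [Complex.I_sq]

lemma reApplyInnerSelf_realPart (T : H →L[ℂ] H) (x : H) :
    (ℜ T : H →L[ℂ] H).reApplyInnerSelf x = T.reApplyInnerSelf x := by
  have hadj : (inner ℂ (adjoint T x) x).re = (inner ℂ (T x) x).re := by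
    rw [adjoint_inner_left, ← RCLike.re_to_complex, inner_re_symm]; rfl
  simp [reApplyInnerSelf_apply, realPart_apply_coe, star_eq_adjoint, inner_add_left,
    ← Complex.coe_smul, inner_smul_left, hadj, ← mul_add, ← two_mul]

section

variable {E : Type*} [NormedAddCommGroup E] [InnerProductSpace ℂ E]

lemma numRad_nonneg (T : E →L[ℂ] E) : 0 ≤ numRad T :=
  Real.sSup_nonneg <| by rintro r ⟨x, -, rfl⟩; exact norm_nonneg _

lemma norm_inner_self_le_numRad (T : E →L[ℂ] E) {x : E} (hx : ‖x‖ = 1) :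
    ‖inner ℂ (T x) x‖ ≤ numRad T := by
  refine le_csSup ⟨‖T‖, ?_⟩ ⟨x, hx, rfl⟩
  rintro r ⟨y, hy, rfl⟩
  calc ‖inner ℂ (T y) y‖ ≤ ‖T y‖ * ‖y‖ := norm_inner_le_norm _ _
    _ ≤ ‖T‖ * ‖y‖ * ‖y‖ := by gcongr; exact T.le_opNorm y
    _ = ‖T‖ := by rw [hy, mul_one, mul_one]

lemma numRad_I_smul (T : E →L[ℂ] E) : numRad (Complex.I • T) = numRad T := by
  simp [numRad]

end

lemma norm_realPart_le_numRad (T : H →L[ℂ] H) : ‖(ℜ T : H →L[ℂ] H)‖ ≤ numRad T := by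
  rw [norm_eq_iSup_rayleighQuotient _ (isSelfAdjoint_iff_isSymmetric.mp (ℜ T).prop)]
  refine ciSup_le fun x ↦ ?_
  rcases eq_or_ne x 0 with rfl | hx
  · simpa using numRad_nonneg T
  have hx' : ((‖x‖⁻¹ : ℝ) : ℂ) ≠ 0 := by simpa using hx
  set u := ((‖x‖⁻¹ : ℝ) : ℂ) • x
  have hu : ‖u‖ = 1 := by simp [u, norm_smul, hx]
  rw [← rayleigh_smul _ x hx', rayleighQuotient, hu, one_pow, div_one, reApplyInnerSelf_realPart,
    reApplyInnerSelf_apply]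
  exact (RCLike.abs_re_le_norm _).trans (norm_inner_self_le_numRad T hu)

lemma norm_imaginaryPart_le_numRad (T : H →L[ℂ] H) : ‖(ℑ T : H →L[ℂ] H)‖ ≤ numRad T := by
  have := norm_realPart_le_numRad (Complex.I • T)
  rwa [realPart_I_smul, AddSubgroup.coe_neg, norm_neg, numRad_I_smul] at this

theorem numRad_sq_ge_of_alphaBetaNormal_general (T : H →L[ℂ] H) (α β : ℝ)
    (h1 : (α^2 : ℝ) • (ContinuousLinearMap.adjoint T * T) ≤ T * ContinuousLinearMap.adjoint T)
    (h2 : T * ContinuousLinearMap.adjoint T ≤ (β^2 : ℝ) • (ContinuousLinearMap.adjoint T * T)) :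
    (numRad T)^2 ≥ max (1 + α^2) (1 + 1/β^2) * ‖T‖^2 / 4 +
      |‖reOp T‖^2 - ‖imOp T‖^2| / 2 := by
  rw [← star_eq_adjoint] at h1 h2
  have hα : (1 + α ^ 2) * ‖T‖ ^ 2 ≤ ‖star T * T + T * star T‖ := by
    simpa [CStarRing.norm_star_mul_self, sq] using
      one_add_mul_norm_le_norm_add (sq_nonneg α) (star_mul_self_nonneg T) h1
  have hβ : (1 + 1 / β ^ 2) * ‖T‖ ^ 2 ≤ ‖star T * T + T * star T‖ := by
    have h2' := inv_smul_le_of_le_smul (sq_nonneg β) (star_mul_self_nonneg T) h2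
    simpa [CStarRing.norm_self_mul_star, sq, add_comm (T * star T)] using
      one_add_mul_norm_le_norm_add (inv_nonneg.mpr (sq_nonneg β)) (mul_star_self_nonneg T) h2'
  have hN : max (1 + α ^ 2) (1 + 1 / β ^ 2) * ‖T‖ ^ 2 ≤ ‖star T * T + T * star T‖ := by
    rw [max_mul_of_nonneg _ _ (by positivity)]
    exact max_le hα hβ
  rw [reOp_eq_realPart, imOp_eq_imaginaryPart]
  set R : H →L[ℂ] H := ↑(ℜ T)
  set I : H →L[ℂ] H := ↑(ℑ T)
  have hmax : max (‖R‖ ^ 2) (‖I‖ ^ 2) ≤ numRad T ^ 2 :=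
    max_le (by gcongr; exact norm_realPart_le_numRad T)
      (by gcongr; exact norm_imaginaryPart_le_numRad T)
  have hsup := two_nsmul_sup_eq_add_add_abs_sub (‖R‖ ^ 2) (‖I‖ ^ 2)
  rw [two_nsmul, abs_sub_comm] at hsup
  linarith [norm_star_mul_self_add_self_mul_star_le T]

theorem numRad_sq_ge_of_alphaBetaNormal (T : H →L[ℂ] H) (α β : ℝ)
    (hα0 : 0 ≤ α) (hα1 : α ≤ 1) (hβ : 1 ≤ β)
    (h1 : (α^2 : ℝ) • (ContinuousLinearMap.adjoint T * T) ≤ T * ContinuousLinearMap.adjoint T)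
    (h2 : T * ContinuousLinearMap.adjoint T ≤ (β^2 : ℝ) • (ContinuousLinearMap.adjoint T * T)) :
    (numRad T)^2 ≥ max (1 + α^2) (1 + 1/β^2) * ‖T‖^2 / 4 +
      |‖reOp T‖^2 - ‖imOp T‖^2| / 2 :=
  numRad_sq_ge_of_alphaBetaNormal_general T α β h1 h2
end
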